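/- Orthogonality relations for the discrete short-time Fourier transform: for g, h, x, y ∈ ℂ^N, ⟨V_g x, V_h y⟩ = N ⟨x, y⟩ ⟨h, g⟩, where the left inner product is over (ℤ_N)². -/

import Mathlib

open scoped Real ComplexConjugate BigOperators

/-- The character `m ↦ e^{2πi m/N}` on `ℤ_N`. -/
noncomputable def zchar (N : ℕ) [NeZero N] (m : ZMod N) : ℂ :=
  Complex.exp (2 * π * Complex.I * (m.val : ℝ) / N)

/-- Circular translation `(T_k x)_j = x_{j-k}` on `ℂ^N`. -/
def tshift {N : ℕ} [NeZero N] (k : ZMod N) (x : ZMod N → ℂ) : ZMod N → ℂ :=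
  fun j => x (j - k)

/-- Modulation `(M_l x)_j = e^{2πi jl/N} x_j` on `ℂ^N`. -/
noncomputable def mshift {N : ℕ} [NeZero N] (l : ZMod N) (x : ZMod N → ℂ) : ZMod N → ℂ :=
  fun j => zchar N (j * l) * x j

/-- Time-frequency shift `π(k,l) = M_l T_k`. -/
noncomputable def tfshift {N : ℕ} [NeZero N] (p : ZMod N × ZMod N)
    (x : ZMod N → ℂ) : ZMod N → ℂ :=
  mshift p.2 (tshift p.1 x)

/-- The discrete short-time Fourier transform `V_g x(λ) = ⟨x, π(λ)g⟩`. -/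
noncomputable def dstft {N : ℕ} [NeZero N] (g x : ZMod N → ℂ)
    (p : ZMod N × ZMod N) : ℂ :=
  ∑ n : ZMod N, x n * conj (tfshift p g n)

/-!
For fixed `k`, `l ↦ V_g x (k, l)` is the discrete Fourier transform of
`n ↦ x n * conj (g (n - k))`. Parseval's identity for the DFT on `ZMod N` (orthogonality of the
characters `l ↦ e^{-2πi nl/N}`) turns the sum over `l` into
`N ∑ n, x n * conj (y n) * h (n - k) * conj (g (n - k))`, and the sum over `k` then factors by
translation invariance of the sum over `ZMod N`.
-/

open ZMod

theorem sum_sum_mul_comp_sub {G R : Type*} [AddGroup G] [Fintype G] [CommSemiring R]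
    (f φ : G → R) : ∑ k, ∑ n, f n * φ (n - k) = (∑ n, f n) * ∑ n, φ n := by
  rw [Finset.sum_comm, Finset.sum_mul]
  refine Finset.sum_congr rfl fun n _ => ?_
  rw [Finset.mul_sum]
  exact Fintype.sum_equiv (Equiv.subLeft n) _ (fun i => f n * φ i) fun k => rfl

variable {N : ℕ} [NeZero N]

namespace ZMod

theorem sum_stdAddChar_mul_conj (i j : ZMod N) :
    ∑ l, stdAddChar (-(i * l)) * conj (stdAddChar (-(j * l))) =
      if i = j then (N : ℂ) else 0 := by
  calc ∑ l, stdAddChar (-(i * l)) * conj (stdAddChar (-(j * l)))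
      = ∑ l, stdAddChar (l * (j - i)) := Finset.sum_congr rfl fun l _ => by
        rw [← AddChar.map_neg_eq_conj, ← AddChar.map_add_eq_mul]; ring_nf
    _ = _ := by
        rw [AddChar.sum_mulShift _ (isPrimitive_stdAddChar N), ZMod.card]
        simp only [sub_eq_zero, eq_comm (a := j), Nat.cast_ite, Nat.cast_zero]

theorem sum_dft_mul_conj_dft (Φ Ψ : ZMod N → ℂ) :
    ∑ l, 𝓕 Φ l * conj (𝓕 Ψ l) = N * ∑ j, Φ j * conj (Ψ j) := by
  calc ∑ l, 𝓕 Φ l * conj (𝓕 Ψ l)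
      = ∑ i, ∑ j, Φ i * conj (Ψ j) *
          ∑ l, stdAddChar (-(i * l)) * conj (stdAddChar (-(j * l))) := by
        simp_rw [dft_apply, smul_eq_mul, map_sum, Finset.sum_mul_sum, Finset.mul_sum]
        rw [Finset.sum_comm]
        refine Finset.sum_congr rfl fun i _ => ?_
        rw [Finset.sum_comm]
        exact Finset.sum_congr rfl fun j _ => Finset.sum_congr rfl fun l _ => by
          rw [map_mul]; ring
    _ = N * ∑ j, Φ j * conj (Ψ j) := by
        simp only [sum_stdAddChar_mul_conj, mul_ite, mul_zero, Finset.sum_ite_eq, Finset.mem_univ,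
          if_true, Finset.mul_sum]
        exact Finset.sum_congr rfl fun i _ => by ring

end ZMod

theorem zchar_eq_stdAddChar (m : ZMod N) : zchar N m = stdAddChar m := by
  rw [stdAddChar_apply, toCircle_apply, zchar]
  push_cast; rfl

theorem dstft_eq_dft (g x : ZMod N → ℂ) (k l : ZMod N) :
    dstft g x (k, l) = 𝓕 (fun n => x n * conj (g (n - k))) l := by
  simp only [dstft, dft_apply, tfshift, mshift, tshift, smul_eq_mul, map_mul, zchar_eq_stdAddChar,
    AddChar.map_neg_eq_conj]
  exact Finset.sum_congr rfl fun n _ => by ring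

/-- Orthogonality relations for the discrete STFT:
`⟨V_g x, V_h y⟩ = N ⟨x, y⟩ ⟨h, g⟩`. -/
theorem dstft_orthogonality {N : ℕ} [NeZero N] (g h x y : ZMod N → ℂ) :
    ∑ p : ZMod N × ZMod N, dstft g x p * conj (dstft h y p) =
      (N : ℂ) * (∑ n : ZMod N, x n * conj (y n)) *
        (∑ n : ZMod N, h n * conj (g n)) := by
  calc ∑ p : ZMod N × ZMod N, dstft g x p * conj (dstft h y p)
      = ∑ k, ∑ l, 𝓕 (fun n => x n * conj (g (n - k))) l *
          conj (𝓕 (fun n => y n * conj (h (n - k))) l) := by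
        simp only [Fintype.sum_prod_type, dstft_eq_dft]
    _ = ∑ k, ∑ n, N * (x n * conj (y n)) * (h (n - k) * conj (g (n - k))) := by
        simp only [sum_dft_mul_conj_dft, Finset.mul_sum, map_mul, Complex.conj_conj]
        exact Finset.sum_congr rfl fun k _ => Finset.sum_congr rfl fun n _ => by ring
    _ = _ := by
        rw [sum_sum_mul_comp_sub (fun n => N * (x n * conj (y n))) fun n => h n * conj (g n),
          ← Finset.mul_sum]
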